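/- arXiv:2208.01125 — 2 statements merged into one kernel-verified Lean document; each statement's English description precedes it below -/
import Mathlib

section
/- For every polynomial p with real coefficients and every z > 0, L[(x²−z²)·p'(x)] = L[2x(x²−z²−1)·p(x)], where L[p] = ∫_{-z}^{z} p(x) e^{-x²} dx. -/
/-! Write `w(x) = e^{-x²}`. Since `w' = -2x w`, integration by parts gives
`L[r'] = L[2x r]` for every polynomial `r` vanishing at `±z`. Applied to `r = (x² - z²) p`,
whose derivative is `(x² - z²) p' + 2x p`, this is the claimed identity. -/

open Polynomial

/-- The truncated Hermite linear functional `L[p] = ∫_{-z}^{z} p(x) e^{-x²} dx`. -/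
noncomputable def truncL (z : ℝ) (p : Polynomial ℝ) : ℝ :=
  ∫ x in (-z)..z, p.eval x * Real.exp (-x ^ 2)

lemma hasDerivAt_eval_mul_exp_neg_sq (p : ℝ[X]) (x : ℝ) :
    HasDerivAt (fun x => p.eval x * Real.exp (-x ^ 2))
      ((derivative p - 2 * X * p).eval x * Real.exp (-x ^ 2)) x := by
  have hw : HasDerivAt (fun x : ℝ => Real.exp (-x ^ 2)) (Real.exp (-x ^ 2) * -(2 * x)) x := by
    simpa using ((hasDerivAt_pow 2 x).neg).exp
  refine ((p.hasDerivAt x).fun_mul hw).congr_deriv ?_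
  simp only [eval_sub, eval_mul, eval_X, eval_ofNat]
  ring

lemma truncL_sub (z : ℝ) (p q : ℝ[X]) : truncL z (p - q) = truncL z p - truncL z q := by
  have hint (r : ℝ[X]) :
      IntervalIntegrable (fun x => r.eval x * Real.exp (-x ^ 2)) MeasureTheory.volume (-z) z :=
    (by fun_prop : Continuous fun x => r.eval x * Real.exp (-x ^ 2)).intervalIntegrable _ _
  simp only [truncL, eval_sub, sub_mul]
  exact intervalIntegral.integral_sub (hint p) (hint q)

lemma truncL_derivative_of_eval_eq_zero {z : ℝ} {r : ℝ[X]} (hz : r.eval z = 0)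
    (hnz : r.eval (-z) = 0) : truncL z (derivative r) = truncL z (2 * X * r) := by
  have hparts : truncL z (derivative r - 2 * X * r) = 0 := by
    rw [truncL, intervalIntegral.integral_eq_sub_of_hasDerivAt
      (fun x _ => hasDerivAt_eval_mul_exp_neg_sq r x)
      ((by fun_prop : Continuous fun x =>
        (derivative r - 2 * X * r).eval x * Real.exp (-x ^ 2)).intervalIntegrable _ _)]
    simp [hz, hnz]
  rwa [truncL_sub, sub_eq_zero] at hparts

theorem truncated_hermite_pearson2_general (z : ℝ) (p : Polynomial ℝ) :
    truncL z ((X ^ 2 - C (z ^ 2)) * derivative p) =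
      truncL z (2 * X * (X ^ 2 - C (z ^ 2) - 1) * p) := by
  set r := (X ^ 2 - C (z ^ 2)) * p
  have hr : truncL z (derivative r) = truncL z (2 * X * r) :=
    truncL_derivative_of_eval_eq_zero (by simp [r]) (by simp [r])
  have hlhs : (X ^ 2 - C (z ^ 2)) * derivative p = derivative r - 2 * X * p := by
    simp only [r, derivative_mul, derivative_sub, derivative_X_sq, derivative_C, C_ofNat]
    ring
  have hrhs : 2 * X * (X ^ 2 - C (z ^ 2) - 1) * p = 2 * X * r - 2 * X * p := by
    simp only [r]
    ring
  rw [hlhs, hrhs, truncL_sub, truncL_sub, hr]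

theorem truncated_hermite_pearson2 (z : ℝ) (hz : 0 < z) (p : Polynomial ℝ) :
    truncL z ((X ^ 2 - C (z ^ 2)) * derivative p) =
      truncL z (2 * X * (X ^ 2 - C (z ^ 2) - 1) * p) :=
  truncated_hermite_pearson2_general z p
end

section
/- The recurrence coefficients γ_n(z) of the monic truncated Hermite polynomials satisfy the Laguerre–Freud equation γ_n·(n + 1/2 − γ_n − γ_{n+1})·(n − 1/2 − γ_n − γ_{n−1}) = z²·(n/2 − γ_n)² for all n ≥ 1. -/
/-!
Write `h n = L[P n * P n]`. The recurrence gives `P n` the parity of `n`, and orthogonality gives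
`h (n + 1) = γ (n + 1) * h n`. Integrating `(q(x) e^{-x²})'` over `[-z, z]` gives
`L[q'] - 2 L[x q] = e^{-z²} (q(z) - q(-z))`. For the odd polynomials `P n * P (n + 1)` and
`x * P n ^ 2` orthogonality computes the left side, which yields
  `(n + 1 - 2 γ (n + 1)) h n = 2 e^{-z²} P n (z) P (n + 1) (z)`,
  `(2 n + 1 - 2 γ n - 2 γ (n + 1)) h n = 2 z e^{-z²} P n (z) ^ 2`.
The product of the second identity at `n` and `n + 1` equals `z²` times the square of the first
at `n`; dividing by `4 h n ^ 2` gives the Laguerre–Freud equation at `n + 1`.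
-/

open Polynomial

open Real

theorem neg_one_pow_mul_self {M : Type*} [Monoid M] [HasDistribNeg M] (n : ℕ) :
    ((-1 : M) ^ n) * (-1) ^ n = 1 := by
  rw [← pow_add, ← two_mul, pow_mul, neg_one_sq, one_pow]

section Orthogonal

variable {R : Type*} [CommRing R]

theorem Polynomial.Monic.degree_sub_C_coeff_mul_lt {p q : R[X]} (hp : p.Monic)
    (hq : q.degree ≤ p.natDegree) : (q - C (q.coeff p.natDegree) * p).degree < p.natDegree := by
  rw [degree_lt_iff_coeff_zero]
  intro m hm
  rw [coeff_sub, coeff_C_mul]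
  rcases hm.eq_or_lt with rfl | hlt
  · rw [hp.coeff_natDegree, mul_one, sub_self]
  · rw [coeff_eq_zero_of_degree_lt (hq.trans_lt (by exact_mod_cast hlt)),
      coeff_eq_zero_of_natDegree_lt hlt, mul_zero, sub_zero]

theorem LinearMap.apply_C_mul (L : R[X] →ₗ[R] R) (a : R) (p : R[X]) :
    L (C a * p) = a * L p := by
  rw [C_mul', map_smul, smul_eq_mul]

theorem Polynomial.eval_neg_eq_neg_one_pow_mul_eval {P : ℕ → R[X]} {γ : ℕ → R}
    (hP0 : P 0 = 1) (hP1 : P 1 = X)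
    (hrec : ∀ n, X * P (n + 1) = P (n + 2) + C (γ (n + 1)) * P n) (n : ℕ) (x : R) :
    (P n).eval (-x) = (-1) ^ n * (P n).eval x := by
  induction n using Nat.twoStepInduction with
  | zero => simp [hP0]
  | one => simp [hP1]
  | more n ih₀ ih₁ =>
    have h := congrArg (eval (-x)) (hrec n)
    have h' := congrArg (eval x) (hrec n)
    simp only [eval_mul, eval_add, eval_X, eval_C] at h h'
    linear_combination -h - x * ih₁ - γ (n + 1) * ih₀ + (-1) ^ n * h'

structure IsMonicOrthogonal (L : R[X] →ₗ[R] R) (P : ℕ → R[X]) : Prop where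
  monic : ∀ n, (P n).Monic
  natDegree_eq : ∀ n, (P n).natDegree = n
  apply_mul_eq_zero : ∀ m n, m ≠ n → L (P m * P n) = 0

namespace IsMonicOrthogonal

variable {L : R[X] →ₗ[R] R} {P : ℕ → R[X]}

theorem coeff_self (hP : IsMonicOrthogonal L P) (n : ℕ) : (P n).coeff n = 1 := by
  simpa [hP.natDegree_eq n] using (hP.monic n).coeff_natDegree

theorem exists_eq_C_coeff_mul_add (hP : IsMonicOrthogonal L P) {q : R[X]} {d : ℕ}
    (hq : q.degree ≤ d) : ∃ r : R[X], r.degree < d ∧ q = C (q.coeff d) * P d + r := by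
  have h := (hP.monic d).degree_sub_C_coeff_mul_lt (q := q)
  rw [hP.natDegree_eq] at h
  exact ⟨_, h hq, by ring⟩

theorem apply_mul_eq_zero_of_degree_lt (hP : IsMonicOrthogonal L P) {q : R[X]} {n : ℕ}
    (hq : q.degree < n) : L (q * P n) = 0 := by
  suffices ∀ d ≤ n, ∀ q : R[X], q.degree < d → L (q * P n) = 0 from this n le_rfl q hq
  intro d
  induction d with
  | zero =>
    intro _ q hq
    rw [degree_eq_bot.mp (Nat.WithBot.lt_zero_iff.mp hq), zero_mul, map_zero]
  | succ d ih =>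
    intro hdn q hq
    obtain ⟨r, hr, hqr⟩ := hP.exists_eq_C_coeff_mul_add (Order.le_of_lt_succ hq)
    rw [hqr, add_mul, map_add, mul_assoc, L.apply_C_mul, hP.apply_mul_eq_zero d n (by omega),
      mul_zero, zero_add, ih (by omega) r hr]

theorem apply_mul_eq_coeff_mul (hP : IsMonicOrthogonal L P) {q : R[X]} {n : ℕ}
    (hq : q.natDegree ≤ n) : L (q * P n) = q.coeff n * L (P n * P n) := by
  obtain ⟨r, hr, hqr⟩ := hP.exists_eq_C_coeff_mul_add (degree_le_of_natDegree_le hq)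
  conv_lhs => rw [hqr]
  rw [add_mul, map_add, mul_assoc, L.apply_C_mul, hP.apply_mul_eq_zero_of_degree_lt hr, add_zero]

theorem apply_X_mul_mul_succ (hP : IsMonicOrthogonal L P) (n : ℕ) :
    L (X * P n * P (n + 1)) = L (P (n + 1) * P (n + 1)) := by
  have hdeg : (X * P n).natDegree ≤ n + 1 := by
    have := natDegree_mul_le (p := X) (q := P n)
    have := natDegree_X_le (R := R)
    rw [hP.natDegree_eq] at *
    omega
  rw [hP.apply_mul_eq_coeff_mul hdeg, coeff_X_mul, hP.coeff_self, one_mul]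

theorem apply_derivative_mul_succ (hP : IsMonicOrthogonal L P) (n : ℕ) :
    L (derivative (P n) * P (n + 1)) = 0 := by
  refine hP.apply_mul_eq_zero_of_degree_lt (degree_derivative_le.trans_lt ?_)
  refine (degree_le_of_natDegree_le (hP.natDegree_eq n).le).trans_lt ?_
  exact_mod_cast n.lt_succ_self

theorem apply_derivative_succ_mul (hP : IsMonicOrthogonal L P) (n : ℕ) :
    L (derivative (P (n + 1)) * P n) = (n + 1) * L (P n * P n) := by
  have hdeg : (derivative (P (n + 1))).natDegree ≤ n := by
    simpa [hP.natDegree_eq] using natDegree_derivative_le (P (n + 1))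
  rw [hP.apply_mul_eq_coeff_mul hdeg, coeff_derivative, hP.coeff_self, one_mul]

theorem apply_X_mul_derivative_mul (hP : IsMonicOrthogonal L P) (n : ℕ) :
    L (X * derivative (P n) * P n) = n * L (P n * P n) := by
  cases n with
  | zero =>
    rw [derivative_of_natDegree_zero (hP.natDegree_eq 0), mul_zero, zero_mul, map_zero,
      Nat.cast_zero, zero_mul]
  | succ n =>
    have hdeg : (X * derivative (P (n + 1))).natDegree ≤ n + 1 := by
      have := natDegree_mul_le (p := X) (q := derivative (P (n + 1)))
      have := natDegree_X_le (R := R)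
      have := natDegree_derivative_le (P (n + 1))
      rw [hP.natDegree_eq] at *
      omega
    rw [hP.apply_mul_eq_coeff_mul hdeg, coeff_X_mul, coeff_derivative, hP.coeff_self, one_mul]
    push_cast
    ring

variable {γ : ℕ → R}

theorem apply_mul_self_succ (hP : IsMonicOrthogonal L P)
    (hrec : ∀ n, X * P (n + 1) = P (n + 2) + C (γ (n + 1)) * P n) (n : ℕ) :
    L (P (n + 1) * P (n + 1)) = γ (n + 1) * L (P n * P n) := by
  have h : X * P n * P (n + 1) = P n * P (n + 2) + C (γ (n + 1)) * (P n * P n) := by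
    linear_combination P n * hrec n
  rw [← hP.apply_X_mul_mul_succ, h, map_add, L.apply_C_mul,
    hP.apply_mul_eq_zero n (n + 2) (by omega), zero_add]

theorem apply_X_mul_mul_X_mul (hP : IsMonicOrthogonal L P) (hP0 : P 0 = 1) (hP1 : P 1 = X)
    (hrec : ∀ n, X * P (n + 1) = P (n + 2) + C (γ (n + 1)) * P n) (hγ0 : γ 0 = 0) (n : ℕ) :
    L (X * P n * (X * P n)) = (γ (n + 1) + γ n) * L (P n * P n) := by
  cases n with
  | zero =>
    have hXP0 : X * P 0 = P 1 := by rw [hP0, hP1, mul_one]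
    rw [hXP0, hP.apply_mul_self_succ hrec, hγ0, add_zero]
  | succ n =>
    have h : X * P (n + 1) * (X * P (n + 1)) =
        X * P (n + 1) * P (n + 2) + C (γ (n + 1)) * (X * P n * P (n + 1)) := by
      linear_combination X * P (n + 1) * hrec n
    rw [h, map_add, L.apply_C_mul, hP.apply_X_mul_mul_succ, hP.apply_X_mul_mul_succ,
      hP.apply_mul_self_succ hrec (n + 1)]
    ring

end IsMonicOrthogonal

end Orthogonal

theorem intervalIntegrable_eval_mul_exp_neg_sq (p : ℝ[X]) (a b : ℝ) :
    IntervalIntegrable (fun x => p.eval x * exp (-x ^ 2)) MeasureTheory.volume a b :=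
  (by fun_prop : Continuous fun x => p.eval x * exp (-x ^ 2)).intervalIntegrable a b

noncomputable def truncLₗ (z : ℝ) : ℝ[X] →ₗ[ℝ] ℝ where
  toFun := truncL z
  map_add' p q := by
    simp only [truncL, eval_add, add_mul]
    exact intervalIntegral.integral_add (intervalIntegrable_eval_mul_exp_neg_sq p _ _)
      (intervalIntegrable_eval_mul_exp_neg_sq q _ _)
  map_smul' a p := by
    simp only [truncL, eval_smul, smul_eq_mul, mul_assoc, RingHom.id_apply]
    exact intervalIntegral.integral_const_mul a _

@[simp]
theorem truncLₗ_apply (z : ℝ) (p : ℝ[X]) : truncLₗ z p = truncL z p := rfl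

theorem truncL_mul_self_pos {z : ℝ} (hz : 0 < z) {p : ℝ[X]} (hp : p ≠ 0) :
    0 < truncL z (p * p) := by
  obtain ⟨c, hc, hpc⟩ := ((Set.Icc_infinite (by linarith : -z < z)).sdiff
    (p.finite_setOfPred_isRoot hp)).nonempty
  refine intervalIntegral.integral_pos (by linarith) (by fun_prop) (fun x _ => ?_) ⟨c, hc, ?_⟩
  · rw [eval_mul]
    exact mul_nonneg (mul_self_nonneg _) (exp_pos _).le
  · rw [eval_mul]
    exact mul_pos (mul_self_pos.mpr hpc) (exp_pos _)

theorem truncL_derivative_sub_two_mul_truncL_X_mul (z : ℝ) (q : ℝ[X]) :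
    truncL z (derivative q) - 2 * truncL z (X * q) =
      exp (-z ^ 2) * (q.eval z - q.eval (-z)) := by
  have hderiv : ∀ x, HasDerivAt (fun x => q.eval x * exp (-x ^ 2))
      ((derivative q).eval x * exp (-x ^ 2) - 2 * ((X * q).eval x * exp (-x ^ 2))) x := by
    intro x
    refine ((q.hasDerivAt x).fun_mul (hasDerivAt_pow 2 x).fun_neg.exp).congr_deriv ?_
    simp only [eval_mul, eval_X]
    ring
  have hint := intervalIntegrable_eval_mul_exp_neg_sq
  have hFTC := intervalIntegral.integral_eq_sub_of_hasDerivAt (fun x _ => hderiv x)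
    ((hint (derivative q) (-z) z).sub ((hint (X * q) (-z) z).const_mul 2))
  rw [intervalIntegral.integral_sub (hint _ _ _) ((hint _ _ _).const_mul 2),
    intervalIntegral.integral_const_mul] at hFTC
  rw [truncL, truncL, hFTC, neg_sq]
  ring

theorem truncLₗ_derivative_sub_of_odd (z : ℝ) {q : ℝ[X]}
    (hq : ∀ x, q.eval (-x) = -q.eval x) :
    truncLₗ z (derivative q) - 2 * truncLₗ z (X * q) = 2 * exp (-z ^ 2) * q.eval z := by
  rw [truncLₗ_apply, truncLₗ_apply, truncL_derivative_sub_two_mul_truncL_X_mul, hq]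
  ring

namespace IsMonicOrthogonal

variable {z : ℝ} {P : ℕ → ℝ[X]}

theorem two_mul_exp_mul_eval_mul_eval_succ (hP : IsMonicOrthogonal (truncLₗ z) P)
    (hpar : ∀ n x, (P n).eval (-x) = (-1) ^ n * (P n).eval x) (n : ℕ) :
    2 * exp (-z ^ 2) * ((P n).eval z * (P (n + 1)).eval z) =
      (n + 1) * truncLₗ z (P n * P n) - 2 * truncLₗ z (P (n + 1) * P (n + 1)) := by
  have hodd : ∀ x, (P n * P (n + 1)).eval (-x) = -(P n * P (n + 1)).eval x := by
    intro x
    simp only [eval_mul, hpar, pow_succ]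
    linear_combination
      (-((P n).eval x * (P (n + 1)).eval x)) * neg_one_pow_mul_self (M := ℝ) n
  rw [← eval_mul, ← truncLₗ_derivative_sub_of_odd z hodd, derivative_mul, map_add,
    ← mul_assoc, hP.apply_X_mul_mul_succ, hP.apply_derivative_mul_succ, mul_comm (P n),
    hP.apply_derivative_succ_mul, zero_add]

theorem two_mul_mul_exp_mul_eval_sq (hP : IsMonicOrthogonal (truncLₗ z) P)
    (hpar : ∀ n x, (P n).eval (-x) = (-1) ^ n * (P n).eval x) (n : ℕ) :
    2 * z * exp (-z ^ 2) * (P n).eval z ^ 2 =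
      (2 * n + 1) * truncLₗ z (P n * P n) - 2 * truncLₗ z (X * P n * (X * P n)) := by
  have hodd : ∀ x, (X * (P n * P n)).eval (-x) = -(X * (P n * P n)).eval x := by
    intro x
    simp only [eval_mul, eval_X, hpar]
    linear_combination (-x * (P n).eval x ^ 2) * neg_one_pow_mul_self (M := ℝ) n
  have hder : derivative (X * (P n * P n)) =
      P n * P n + (X * derivative (P n) * P n + X * derivative (P n) * P n) := by
    simp only [derivative_mul, derivative_X]
    ring
  have hsq : X * (X * (P n * P n)) = X * P n * (X * P n) := by ring
  have := truncLₗ_derivative_sub_of_odd z hodd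
  rw [hder, hsq, map_add, map_add, hP.apply_X_mul_derivative_mul, eval_mul, eval_mul, eval_X]
    at this
  linear_combination -this

end IsMonicOrthogonal

theorem truncated_hermite_laguerre_freud_general (z : ℝ) (hz : 0 < z)
    (P : ℕ → Polynomial ℝ) (γ : ℕ → ℝ)
    (hmonic : ∀ n, (P n).Monic) (hdeg : ∀ n, (P n).natDegree = n)
    (horth : ∀ m n, m ≠ n → truncL z (P m * P n) = 0)
    (hP0 : P 0 = 1) (hP1 : P 1 = X)
    (hrec : ∀ n, X * P (n + 1) = P (n + 2) + C (γ (n + 1)) * P n)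
    (hγ0 : γ 0 = 0) :
    ∀ n : ℕ, 1 ≤ n →
      γ n * ((n : ℝ) + 1 / 2 - γ n - γ (n + 1)) * ((n : ℝ) - 1 / 2 - γ n - γ (n - 1)) =
        z ^ 2 * ((n : ℝ) / 2 - γ n) ^ 2 := by
  intro n hn
  obtain ⟨m, rfl⟩ : ∃ m, n = m + 1 := ⟨n - 1, by omega⟩
  have hP : IsMonicOrthogonal (truncLₗ z) P := ⟨hmonic, hdeg, horth⟩
  have hpar := eval_neg_eq_neg_one_pow_mul_eval hP0 hP1 hrec
  have hA := hP.two_mul_exp_mul_eval_mul_eval_succ hpar m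
  have hB₀ := hP.two_mul_mul_exp_mul_eval_sq hpar m
  have hB₁ := hP.two_mul_mul_exp_mul_eval_sq hpar (m + 1)
  rw [hP.apply_X_mul_mul_X_mul hP0 hP1 hrec hγ0] at hB₀ hB₁
  rw [hP.apply_mul_self_succ hrec] at hA hB₁
  have hpos : 0 < truncLₗ z (P m * P m) := truncL_mul_self_pos hz (hmonic m).ne_zero
  set h := truncLₗ z (P m * P m)
  set E := exp (-z ^ 2)
  set a := (P m).eval z
  set b := (P (m + 1)).eval z
  refine mul_right_cancel₀ (pow_ne_zero 2 hpos.ne') ?_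
  simp only [Nat.add_sub_cancel]
  push_cast at hB₁ ⊢
  -- the left sides of `hB₀ * hB₁` and of `z ^ 2 * hA ^ 2` are both `4 z² E² a² b²`
  linear_combination
    (-(2 * ((m : ℝ) + 1) + 1 - 2 * γ (m + 1 + 1) - 2 * γ (m + 1)) * γ (m + 1) * h / 4) * hB₀
      - (2 * z * E * a ^ 2 / 4) * hB₁
      + (z ^ 2 * ((m + 1 - 2 * γ (m + 1)) * h + 2 * E * (a * b)) / 4) * hA

theorem truncated_hermite_laguerre_freud (z : ℝ) (hz : 0 < z)
    (P : ℕ → Polynomial ℝ) (γ h : ℕ → ℝ)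
    (hmonic : ∀ n, (P n).Monic) (hdeg : ∀ n, (P n).natDegree = n)
    (horth : ∀ m n, m ≠ n → truncL z (P m * P n) = 0)
    (hP0 : P 0 = 1) (hP1 : P 1 = X)
    (hrec : ∀ n, X * P (n + 1) = P (n + 2) + C (γ (n + 1)) * P n)
    (hh : ∀ n, h n = truncL z (P n * P n)) (hγ0 : γ 0 = 0) :
    ∀ n : ℕ, 1 ≤ n →
      γ n * ((n : ℝ) + 1 / 2 - γ n - γ (n + 1)) * ((n : ℝ) - 1 / 2 - γ n - γ (n - 1)) =
        z ^ 2 * ((n : ℝ) / 2 - γ n) ^ 2 :=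
  truncated_hermite_laguerre_freud_general z hz P γ hmonic hdeg horth hP0 hP1 hrec hγ0
end
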